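/- If a basis 𝓑 of a Banach space X is C_ℓ-suppression quasi-greedy and Δ_{𝐧,pl}-(𝐧, PSLC), then 𝓑 is (𝐧, strong partially greedy) with constant C_{𝐧,sp} ≤ C_ℓ·Δ_{𝐧,pl}. -/

import Mathlib

open scoped BigOperators ENNReal NNReal

/-- The collection `𝕋(𝐧)`: pairs of finite sets `(A, D)` with `A ⊆ 𝐧`, `|A| ≤ |D|`
and `A < D ∩ 𝐧`. -/
def TPair (seq : ℕ → ℕ) (A D : Finset ℕ) : Prop :=
  (↑A : Set ℕ) ⊆ Set.range seq ∧ A.card ≤ D.card ∧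
    ∀ a ∈ A, ∀ d ∈ D, d ∈ Set.range seq → a < d

/-- The collection `𝕊(𝐧)`: pairs of finite sets `(A, D)` with `A ⊆ 𝐧` and `|A| ≤ |D|`. -/
def SPair (seq : ℕ → ℕ) (A D : Finset ℕ) : Prop :=
  (↑A : Set ℕ) ⊆ Set.range seq ∧ A.card ≤ D.card

/-- The interval `{n_{k+1}, …, n_{k+m}}` of `m` consecutive terms of the sequence `seq`
(0-indexed: `seq k, …, seq (k+m-1)`). -/
def intervalSet (seq : ℕ → ℕ) (k m : ℕ) : Finset ℕ :=
  (Finset.range m).image fun i => seq (k + i)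

/-- The (1-based) index `ι(max A)` of the largest element of `A` in the sequence `seq`
(`0` if `A` is empty). -/
noncomputable def iotaMax (seq : ℕ → ℕ) (A : Finset ℕ) : ℕ :=
  if h : A.Nonempty then sInf {i | seq i = A.max' h} + 1 else 0

/-- The collection `𝕋^ω(𝐧)`: pairs of finite sets `(A, D)` with `A ⊆ 𝐧`, `ω(A) ≤ ω(D)`
and `A < D ∩ 𝐧`. -/
def WTPair (w : Set ℕ → ℝ≥0∞) (seq : ℕ → ℕ) (A D : Finset ℕ) : Prop :=
  (↑A : Set ℕ) ⊆ Set.range seq ∧ w (↑A : Set ℕ) ≤ w (↑D : Set ℕ) ∧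
    ∀ a ∈ A, ∀ d ∈ D, d ∈ Set.range seq → a < d

/-- A (semi-normalized) basis `(e_n)` of a Banach space `X`, together with its biorthogonal
functionals `(e_n^*)`: the span of the `e_n` is norm-dense, `e_j^*(e_k) = δ_{jk}`, and the
norms of the `e_n` and `e_n^*` are bounded above and away from zero. -/
structure BasisOf (𝕜 : Type*) (X : Type*) [RCLike 𝕜] [NormedAddCommGroup X]
    [NormedSpace 𝕜 X] where
  e : ℕ → X
  coord : ℕ → X →L[𝕜] 𝕜
  dense_span : Dense (↑(Submodule.span 𝕜 (Set.range e)) : Set X)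
  biorth : ∀ j k : ℕ, coord j (e k) = if j = k then (1 : 𝕜) else 0
  norm_bounds : ∃ c₁ c₂ : ℝ, 0 < c₁ ∧ (∀ n, c₁ ≤ ‖e n‖ ∧ c₁ ≤ ‖coord n‖) ∧
    ∀ n, ‖e n‖ ≤ c₂ ∧ ‖coord n‖ ≤ c₂

namespace BasisOf

variable {𝕜 : Type*} {X : Type*} [RCLike 𝕜] [NormedAddCommGroup X] [NormedSpace 𝕜 X]
variable (B : BasisOf 𝕜 X)

/-- The projection `P_A(x) = ∑_{n ∈ A} e_n^*(x) e_n`. -/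
noncomputable def proj (A : Finset ℕ) (x : X) : X := ∑ n ∈ A, B.coord n x • B.e n

/-- `1_{εA} = ∑_{n ∈ A} ε_n e_n`. -/
noncomputable def sgnSum (ε : ℕ → 𝕜) (A : Finset ℕ) : X := ∑ n ∈ A, ε n • B.e n

/-- `1_A = ∑_{n ∈ A} e_n`. -/
noncomputable def ones (A : Finset ℕ) : X := ∑ n ∈ A, B.e n

/-- `P^𝐧_m(x) = ∑_{i=1}^m e_{n_i}^*(x) e_{n_i}`, the projection on the first `m` terms of the
subsequence given by `seq`. -/
noncomputable def projSeq (seq : ℕ → ℕ) (m : ℕ) (x : X) : X :=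
  ∑ i ∈ Finset.range m, B.coord (seq i) x • B.e (seq i)

/-- `A` is a greedy set of `x`: the coefficients inside `A` dominate those outside. -/
def IsGreedySet (x : X) (A : Finset ℕ) : Prop :=
  ∀ a ∈ A, ∀ b ∉ A, ‖B.coord b x‖ ≤ ‖B.coord a x‖

/-- The support `{n : e_n^*(x) ≠ 0}`. -/
def supp (x : X) : Set ℕ := {n | B.coord n x ≠ 0}

/-- `𝓑` is `C`-(`𝐧`, strong partially greedy):
`‖x - G_m(x)‖ ≤ C ⋅ σ̂^𝐧_m(x)` for all `x`, all `m ≥ 1` and all greedy sums. -/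
def SPGWith (seq : ℕ → ℕ) (C : ℝ) : Prop :=
  ∀ x : X, ∀ m : ℕ, 1 ≤ m → ∀ A : Finset ℕ, A.card = m → B.IsGreedySet x A →
    ∀ k : ℕ, k ≤ m → ‖x - B.proj A x‖ ≤ C * ‖x - B.projSeq seq k x‖

/-- `𝓑` is (`𝐧`, strong partially greedy). -/
def SPG (seq : ℕ → ℕ) : Prop := ∃ C : ℝ, 1 ≤ C ∧ B.SPGWith seq C

/-- `𝓑` is quasi-greedy with constant `C`. -/
def QuasiGreedyWith (C : ℝ) : Prop :=
  ∀ x : X, ∀ A : Finset ℕ, A.Nonempty → B.IsGreedySet x A → ‖B.proj A x‖ ≤ C * ‖x‖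

/-- `𝓑` is quasi-greedy. -/
def QuasiGreedy : Prop := ∃ C : ℝ, B.QuasiGreedyWith C

/-- `𝓑` is suppression quasi-greedy with constant `C`. -/
def SuppQGWith (C : ℝ) : Prop :=
  ∀ x : X, ∀ A : Finset ℕ, A.Nonempty → B.IsGreedySet x A → ‖x - B.proj A x‖ ≤ C * ‖x‖

/-- `𝓑` is `C`-(`𝐧`, PSLC). -/
def PSLCWith (seq : ℕ → ℕ) (C : ℝ) : Prop :=
  ∀ x : X, (∀ n, ‖B.coord n x‖ ≤ 1) → ∀ A D : Finset ℕ, TPair seq A D →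
    (∀ d ∈ D, B.coord d x = 0) →
    (∀ a ∈ A, ∀ j : ℕ, (j ∈ D ∨ B.coord j x ≠ 0) → j ∈ Set.range seq → a < j) →
    ∀ ε δ : ℕ → 𝕜, (∀ n, ‖ε n‖ = 1) → (∀ n, ‖δ n‖ = 1) →
      ‖x + B.sgnSum ε A‖ ≤ C * ‖x + B.sgnSum δ D‖

/-- `𝓑` is (`𝐧`, PSLC). -/
def PSLC (seq : ℕ → ℕ) : Prop := ∃ C : ℝ, 1 ≤ C ∧ B.PSLCWith seq C

/-- `𝓑` is (`𝐧`, superconservative) with constant `C`. -/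
def SuperconservativeWith (seq : ℕ → ℕ) (C : ℝ) : Prop :=
  ∀ A D : Finset ℕ, TPair seq A D →
    ∀ ε δ : ℕ → 𝕜, (∀ n, ‖ε n‖ = 1) → (∀ n, ‖δ n‖ = 1) →
      ‖B.sgnSum ε A‖ ≤ C * ‖B.sgnSum δ D‖

/-- `𝓑` is (`𝐧`, superconservative). -/
def Superconservative (seq : ℕ → ℕ) : Prop :=
  ∃ C : ℝ, 0 < C ∧ B.SuperconservativeWith seq C

/-- `𝓑` is (`𝐧`, conservative) with constant `C`. -/
def ConservativeWith (seq : ℕ → ℕ) (C : ℝ) : Prop :=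
  ∀ A D : Finset ℕ, TPair seq A D → ‖B.ones A‖ ≤ C * ‖B.ones D‖

/-- `𝓑` is (`𝐧`, conservative). -/
def Conservative (seq : ℕ → ℕ) : Prop := ∃ C : ℝ, 0 < C ∧ B.ConservativeWith seq C

/-- `𝓑` is (`𝐧`, democratic) with constant `C`. -/
def DemocraticWith (seq : ℕ → ℕ) (C : ℝ) : Prop :=
  ∀ A D : Finset ℕ, SPair seq A D → ‖B.ones A‖ ≤ C * ‖B.ones D‖

/-- `𝓑` is (`𝐧`, democratic). -/
def Democratic (seq : ℕ → ℕ) : Prop := ∃ C : ℝ, B.DemocraticWith seq C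

/-- `𝓑` is (`𝐧`, almost greedy) with constant `C`:
`‖x - G_m(x)‖ ≤ C σ̃^𝐧_m(x)` where `σ̃^𝐧_m(x) = inf {‖x - P_D(x)‖ : D ⊆ 𝐧, |D| = m}`. -/
def AlmostGreedyWith (seq : ℕ → ℕ) (C : ℝ) : Prop :=
  ∀ x : X, ∀ m : ℕ, 1 ≤ m → ∀ A : Finset ℕ, A.card = m → B.IsGreedySet x A →
    ∀ D : Finset ℕ, (↑D : Set ℕ) ⊆ Set.range seq → D.card = m →
      ‖x - B.proj A x‖ ≤ C * ‖x - B.proj D x‖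

/-- `𝓑` is (`𝐧`, almost greedy). -/
def AlmostGreedy (seq : ℕ → ℕ) : Prop := ∃ C : ℝ, 1 ≤ C ∧ B.AlmostGreedyWith seq C

/-- `𝓑` is 1-unconditional. -/
def OneUnconditional : Prop :=
  ∀ (F : Finset ℕ) (a b : ℕ → 𝕜), (∀ n, ‖a n‖ ≤ ‖b n‖) →
    ‖∑ n ∈ F, a n • B.e n‖ ≤ ‖∑ n ∈ F, b n • B.e n‖

/-- `𝓑` is `C`-(`𝐧`, consecutive almost greedy) of type I. -/
def CAGIWith (seq : ℕ → ℕ) (C : ℝ) : Prop :=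
  ∀ x : X, ∀ m : ℕ, 1 ≤ m → ∀ A : Finset ℕ, A.card = m → B.IsGreedySet x A →
    ∀ k : ℕ, ‖x - B.proj A x‖ ≤ C * ‖x - B.proj (intervalSet seq k m) x‖

/-- `𝓑` is `C`-(`𝐧`, consecutive almost greedy) of type II. -/
def CAGIIWith (seq : ℕ → ℕ) (C : ℝ) : Prop :=
  ∀ x : X, ∀ m : ℕ, 1 ≤ m → ∀ A : Finset ℕ, A.card = m → B.IsGreedySet x A →
    ∀ k p : ℕ, ((↑(intervalSet seq k p) : Set ℕ) ∩ B.supp x).ncard ≤ m →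
      ‖x - B.proj A x‖ ≤ C * ‖x - B.proj (intervalSet seq k p) x‖

/-- `𝓑` is `C`-(`𝐧`, RSLC). -/
def RSLCWith (seq : ℕ → ℕ) (C : ℝ) : Prop :=
  ∀ x : X, (∀ n, ‖B.coord n x‖ ≤ 1) → ∀ A D : Finset ℕ, SPair seq A D →
    (∀ d ∈ D, B.coord d x = 0) →
    (∀ j : ℕ, (j ∈ D ∨ B.coord j x ≠ 0) → j ∈ Set.range seq →
      (∀ a ∈ A, j < a) ∨ (∀ a ∈ A, a < j)) →
    ∀ ε δ : ℕ → 𝕜, (∀ n, ‖ε n‖ = 1) → (∀ n, ‖δ n‖ = 1) →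
      ‖x + B.sgnSum ε A‖ ≤ C * ‖x + B.sgnSum δ D‖

/-- `𝓑` is `C`-(`𝐧`, SLC). -/
def SLCWith (seq : ℕ → ℕ) (C : ℝ) : Prop :=
  ∀ x : X, (∀ n, ‖B.coord n x‖ ≤ 1) → ∀ A D : Finset ℕ, SPair seq A D →
    Disjoint A D → (∀ a ∈ A, B.coord a x = 0) → (∀ d ∈ D, B.coord d x = 0) →
    ∀ ε δ : ℕ → 𝕜, (∀ n, ‖ε n‖ = 1) → (∀ n, ‖δ n‖ = 1) →
      ‖x + B.sgnSum ε A‖ ≤ C * ‖x + B.sgnSum δ D‖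

/-- The Lebesgue-type parameter `L̂^𝐧_m`: the least constant `C ∈ [0,∞]` with
`‖x - G_m(x)‖ ≤ C σ̂^𝐧_m(x)` for all `x` and all greedy sums `G_m(x)`. -/
noncomputable def Lhat (seq : ℕ → ℕ) (m : ℕ) : ℝ≥0∞ :=
  sInf {C : ℝ≥0∞ | ∀ (x : X) (A : Finset ℕ), A.card = m → B.IsGreedySet x A →
    ∀ k : ℕ, k ≤ m →
      (‖x - B.proj A x‖₊ : ℝ≥0∞) ≤ C * (‖x - B.projSeq seq k x‖₊ : ℝ≥0∞)}

/-- The parameter `g_m^c`. -/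
noncomputable def gc (m : ℕ) : ℝ≥0∞ :=
  ⨆ (x : X) (_ : x ≠ 0) (A : Finset ℕ) (_ : A.card ≤ m) (_ : B.IsGreedySet x A),
    (‖x - B.proj A x‖₊ : ℝ≥0∞) / (‖x‖₊ : ℝ≥0∞)

/-- The parameter `g̃_m`. -/
noncomputable def gtilde (m : ℕ) : ℝ≥0∞ :=
  ⨆ (x : X) (_ : x ≠ 0) (A : Finset ℕ) (A' : Finset ℕ) (_ : A ⊆ A') (_ : A.card < A'.card)
    (_ : A'.card ≤ m) (_ : B.IsGreedySet x A) (_ : B.IsGreedySet x A'),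
    (‖B.proj A' x - B.proj A x‖₊ : ℝ≥0∞) / (‖x‖₊ : ℝ≥0∞)

/-- The parameter `sc^𝐧_m`. -/
noncomputable def scParam (seq : ℕ → ℕ) (m : ℕ) : ℝ≥0∞ :=
  ⨆ (A : Finset ℕ) (D : Finset ℕ) (_ : TPair seq A D) (_ : D.card ≤ m)
    (_ : ∀ a ∈ A, a ≤ seq (m - 1)) (ε : ℕ → 𝕜) (_ : ∀ n, ‖ε n‖ = 1)
    (δ : ℕ → 𝕜) (_ : ∀ n, ‖δ n‖ = 1),
    (‖B.sgnSum ε A‖₊ : ℝ≥0∞) / (‖B.sgnSum δ D‖₊ : ℝ≥0∞)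

/-- The parameter `ω^𝐧_m`. -/
noncomputable def omegaParam (seq : ℕ → ℕ) (m : ℕ) : ℝ≥0∞ :=
  ⨆ (x : X) (_ : ∀ n, ‖B.coord n x‖ ≤ 1) (A : Finset ℕ) (D : Finset ℕ)
    (_ : (↑A : Set ℕ) ⊆ Set.range seq) (_ : A.card ≤ D.card) (_ : D.card ≤ m)
    (_ : ∀ a ∈ A, a ≤ seq (m - 1)) (_ : ∀ d ∈ D, B.coord d x = 0)
    (_ : ∀ a ∈ A, ∀ j : ℕ, (j ∈ D ∨ B.coord j x ≠ 0) → j ∈ Set.range seq → a < j)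
    (ε : ℕ → 𝕜) (_ : ∀ n, ‖ε n‖ = 1) (δ : ℕ → 𝕜) (_ : ∀ n, ‖δ n‖ = 1),
    (‖x + B.sgnSum ε A‖₊ : ℝ≥0∞) / (‖x + B.sgnSum δ D‖₊ : ℝ≥0∞)

/-- The parameter `ω̂^𝐧_m`. -/
noncomputable def omegaHatParam (seq : ℕ → ℕ) (m : ℕ) : ℝ≥0∞ :=
  ⨆ (x : X) (_ : ∀ n, ‖B.coord n x‖ ≤ 1) (A : Finset ℕ) (D : Finset ℕ)
    (_ : (↑A : Set ℕ) ⊆ Set.range seq) (_ : A.card ≤ D.card) (_ : D.card ≤ m)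
    (_ : ∀ a ∈ A, a ≤ seq (m - 1))
    (_ : ∀ d ∈ D, B.coord d (x - B.proj A x) = 0)
    (_ : ∀ a ∈ A, ∀ j : ℕ, (j ∈ D ∨ B.coord j (x - B.proj A x) ≠ 0) →
      j ∈ Set.range seq → a < j)
    (ε : ℕ → 𝕜) (_ : ∀ n, ‖ε n‖ = 1),
    (‖x‖₊ : ℝ≥0∞) / (‖x - B.proj A x + B.sgnSum ε D‖₊ : ℝ≥0∞)

/-- `κ = sup_{j,k} ‖e_j‖ ‖e_k^*‖`. -/
noncomputable def kappa : ℝ≥0∞ :=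
  ⨆ (j : ℕ) (k : ℕ), ((‖B.e j‖₊ * ‖B.coord k‖₊ : ℝ≥0) : ℝ≥0∞)

/-- `𝓑` is `𝐬`-(`𝐧`, strong partially greedy) with constant `C`:
the strong partially greedy inequality for all orders `m` in the sequence `s`. -/
def SPGOnWith (seq : ℕ → ℕ) (s : ℕ → ℕ) (C : ℝ) : Prop :=
  ∀ x : X, ∀ i : ℕ, ∀ A : Finset ℕ, A.card = s i → B.IsGreedySet x A →
    ∀ k : ℕ, k ≤ s i → ‖x - B.proj A x‖ ≤ C * ‖x - B.projSeq seq k x‖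

/-- `𝓑` is (`λ`, `𝐧`, strong partially greedy). -/
def LamSPG (seq : ℕ → ℕ) (lam : ℝ) : Prop :=
  ∃ C : ℝ, 1 ≤ C ∧ ∀ x : X, ∀ m : ℕ, 1 ≤ m →
    ∀ A : Finset ℕ, A.card = ⌈lam * (m : ℝ)⌉₊ → B.IsGreedySet x A →
      ∀ k : ℕ, k ≤ m → ‖x - B.proj A x‖ ≤ C * ‖x - B.projSeq seq k x‖

/-- `𝓑` is (`λ`, `𝐧`, PSLC). -/
def LamPSLC (seq : ℕ → ℕ) (lam : ℝ) : Prop :=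
  ∃ C : ℝ, 1 ≤ C ∧ ∀ x : X, (∀ n, ‖B.coord n x‖ ≤ 1) →
    ∀ A D : Finset ℕ, (↑A : Set ℕ) ⊆ Set.range seq → A.card ≤ D.card →
      (lam - 1) * (iotaMax seq A : ℝ) + A.card ≤ D.card →
      (∀ d ∈ D, B.coord d x = 0) →
      (∀ a ∈ A, ∀ j : ℕ, (j ∈ D ∨ B.coord j x ≠ 0) → j ∈ Set.range seq → a < j) →
      ∀ ε δ : ℕ → 𝕜, (∀ n, ‖ε n‖ = 1) → (∀ n, ‖δ n‖ = 1) →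
        ‖x + B.sgnSum ε A‖ ≤ C * ‖x + B.sgnSum δ D‖

/-- `𝓑` is (`λ`, `𝐧`, superconservative). -/
def LamSuperconservative (seq : ℕ → ℕ) (lam : ℝ) : Prop :=
  ∃ C : ℝ, 0 < C ∧ ∀ A D : Finset ℕ, TPair seq A D →
    (lam - 1) * (iotaMax seq A : ℝ) + A.card ≤ D.card →
    ∀ ε δ : ℕ → 𝕜, (∀ n, ‖ε n‖ = 1) → (∀ n, ‖δ n‖ = 1) →
      ‖B.sgnSum ε A‖ ≤ C * ‖B.sgnSum δ D‖

/-- `𝓑` is (`λ`, `𝐧`, conservative). -/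
def LamConservative (seq : ℕ → ℕ) (lam : ℝ) : Prop :=
  ∃ C : ℝ, 0 < C ∧ ∀ A D : Finset ℕ, TPair seq A D →
    (lam - 1) * (iotaMax seq A : ℝ) + A.card ≤ D.card →
    ‖B.ones A‖ ≤ C * ‖B.ones D‖

/-- `𝓑` is `ω`-(`𝐧`, strong partially greedy) for the weight on sets `w`. -/
def WSPG (seq : ℕ → ℕ) (w : Set ℕ → ℝ≥0∞) : Prop :=
  ∃ C : ℝ, 1 ≤ C ∧ ∀ x : X, ∀ m : ℕ, 1 ≤ m → ∀ A : Finset ℕ, A.card = m →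
    B.IsGreedySet x A → ∀ m' : ℕ,
      w (↑((Finset.range m').image seq \ A) : Set ℕ) ≤
        w (↑(A \ (Finset.range m').image seq) : Set ℕ) →
      ‖x - B.proj A x‖ ≤ C * ‖x - B.proj ((Finset.range m').image seq) x‖

/-- `𝓑` is `ω`-(`𝐧`, PSLC). -/
def WPSLC (seq : ℕ → ℕ) (w : Set ℕ → ℝ≥0∞) : Prop :=
  ∃ C : ℝ, 1 ≤ C ∧ ∀ x : X, (∀ n, ‖B.coord n x‖ ≤ 1) →
    ∀ A D : Finset ℕ, WTPair w seq A D →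
      (∀ d ∈ D, B.coord d x = 0) →
      (∀ a ∈ A, ∀ j : ℕ, (j ∈ D ∨ B.coord j x ≠ 0) → j ∈ Set.range seq → a < j) →
      ∀ ε δ : ℕ → 𝕜, (∀ n, ‖ε n‖ = 1) → (∀ n, ‖δ n‖ = 1) →
        ‖x + B.sgnSum ε A‖ ≤ C * ‖x + B.sgnSum δ D‖

/-- `𝓑` is `ω`-(`𝐧`, superconservative). -/
def WSuperconservative (seq : ℕ → ℕ) (w : Set ℕ → ℝ≥0∞) : Prop :=
  ∃ C : ℝ, 0 < C ∧ ∀ A D : Finset ℕ, WTPair w seq A D →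
    ∀ ε δ : ℕ → 𝕜, (∀ n, ‖ε n‖ = 1) → (∀ n, ‖δ n‖ = 1) →
      ‖B.sgnSum ε A‖ ≤ C * ‖B.sgnSum δ D‖

/-- `𝓑` is `ω`-(`𝐧`, conservative). -/
def WConservative (seq : ℕ → ℕ) (w : Set ℕ → ℝ≥0∞) : Prop :=
  ∃ C : ℝ, 0 < C ∧ ∀ A D : Finset ℕ, WTPair w seq A D → ‖B.ones A‖ ≤ C * ‖B.ones D‖

end BasisOf

/-- A Banach space over `𝕜` equipped with a basis. -/
structure BanachWithBasis (𝕜 : Type*) [RCLike 𝕜] where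
  carrier : Type
  [grp : NormedAddCommGroup carrier]
  [mod : NormedSpace 𝕜 carrier]
  [comp : CompleteSpace carrier]
  basis : BasisOf 𝕜 carrier

attribute [instance] BanachWithBasis.grp BanachWithBasis.mod BanachWithBasis.comp

/-!
Let `A` be a greedy set of `x` with `|A| = m`, let `S = {n₁, …, n_k}` with `k ≤ m`, let
`t = min_{a ∈ A} |e_a^*(x)|`, `y = x - P_S x` and `z = x - P_{A ∪ S} x`. Then
`x - P_A x = z + P_{S \ A} x`, and the coefficients of `x` on `S \ A` are at most `t` in modulus,
so by convexity they can be replaced by `t ε_n` for some signs `ε` without decreasing the norm.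
Since `S \ A` precedes `A \ S` in `𝐧` and `|S \ A| ≤ |A \ S|`, PSLC applied to `z / t` trades
`t 1_{ε(S \ A)}` for `t 1_{δ(A \ S)}`, where `δ` are the signs of `x`, at the cost of `Δ`.
Finally `z + t 1_{δ(A \ S)}` is the truncation of `y` at level `t`, a convex combination of vectors
`y - P_U y` with `U` greedy sets of `y`, so its norm is at most `C_ℓ ‖y‖`.
-/

section SignChoice

variable {𝕜 E : Type*} [RCLike 𝕜] [NormedAddCommGroup E] [NormedSpace 𝕜 E]

theorem exists_norm_eq_one_eq_norm_mul (c : 𝕜) : ∃ u : 𝕜, ‖u‖ = 1 ∧ c = ‖c‖ * u := by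
  rcases eq_or_ne c 0 with rfl | hc
  · exact ⟨1, norm_one, by simp⟩
  · have hc' : (‖c‖ : 𝕜) ≠ 0 := RCLike.ofReal_ne_zero.mpr (norm_ne_zero_iff.mpr hc)
    refine ⟨(‖c‖ : 𝕜)⁻¹ * c, ?_, by rw [← mul_assoc, mul_inv_cancel₀ hc', one_mul]⟩
    rw [norm_mul, norm_inv, RCLike.norm_ofReal, abs_norm, inv_mul_cancel₀ (norm_ne_zero_iff.mpr hc)]

/-- `w + c • v` lies on the segment from `w - t u • v` to `w + t u • v`, where `u` is the phase
of `c`, so its norm is at most that of one of the endpoints. -/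
theorem exists_norm_eq_one_norm_add_smul_le (w v : E) {c : 𝕜} {t : ℝ} (hc : ‖c‖ ≤ t) :
    ∃ u : 𝕜, ‖u‖ = 1 ∧ ‖w + c • v‖ ≤ ‖w + (t : 𝕜) • u • v‖ := by
  obtain ⟨u, hu, hcu⟩ := exists_norm_eq_one_eq_norm_mul c
  rcases (norm_nonneg c).trans hc |>.eq_or_lt with rfl | ht
  · exact ⟨u, hu, by simp [norm_le_zero_iff.mp hc]⟩
  set a : ℝ := (t + ‖c‖) / (2 * t)
  have ha₀ : 0 ≤ a := by positivity
  have ha₁ : 0 ≤ 1 - a := by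
    rw [sub_nonneg, div_le_one (by positivity)]; linarith
  have hca : c = ((2 * a - 1) * t : ℝ) * u := by
    rw [hcu]; congr 2; simp only [a]; field_simp; ring
  have hcomb : w + c • v
      = (a : 𝕜) • (w + (t : 𝕜) • u • v) + ((1 - a : ℝ) : 𝕜) • (w + (t : 𝕜) • (-u) • v) := by
    rw [hca]; push_cast; module
  set M := max ‖w + (t : 𝕜) • u • v‖ ‖w + (t : 𝕜) • (-u) • v‖
  have hbound : ‖w + c • v‖ ≤ M := calc
    ‖w + c • v‖ ≤ a * ‖w + (t : 𝕜) • u • v‖ + (1 - a) * ‖w + (t : 𝕜) • (-u) • v‖ := by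
        rw [hcomb]
        refine (norm_add_le _ _).trans_eq ?_
        rw [norm_smul, norm_smul, RCLike.norm_ofReal, RCLike.norm_ofReal, abs_of_nonneg ha₀,
          abs_of_nonneg ha₁]
    _ ≤ a * M + (1 - a) * M := by gcongr; exacts [le_max_left _ _, le_max_right _ _]
    _ = M := by ring
  rcases max_choice ‖w + (t : 𝕜) • u • v‖ ‖w + (t : 𝕜) • (-u) • v‖ with hmax | hmax
  · exact ⟨u, hu, hmax ▸ hbound⟩
  · exact ⟨-u, by rw [norm_neg, hu], hmax ▸ hbound⟩

theorem exists_norm_eq_one_norm_add_sum_smul_le {ι : Type*} [DecidableEq ι] (F : Finset ι)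
    (v : ι → E) (c : ι → 𝕜) {t : ℝ} (hc : ∀ n ∈ F, ‖c n‖ ≤ t) (w : E) :
    ∃ ε : ι → 𝕜, (∀ n, ‖ε n‖ = 1) ∧
      ‖w + ∑ n ∈ F, c n • v n‖ ≤ ‖w + (t : 𝕜) • ∑ n ∈ F, ε n • v n‖ := by
  induction F using Finset.induction generalizing w with
  | empty => exact ⟨fun _ => 1, fun _ => norm_one, by simp⟩
  | @insert a F ha ih =>
    obtain ⟨u, hu, hstep⟩ := exists_norm_eq_one_norm_add_smul_le (w + ∑ n ∈ F, c n • v n) (v a)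
      (hc a (Finset.mem_insert_self a F))
    obtain ⟨ε, hε, hrest⟩ := ih (fun n hn => hc n (Finset.mem_insert_of_mem hn))
      (w + (t : 𝕜) • u • v a)
    refine ⟨Function.update ε a u, fun n => ?_, ?_⟩
    · rcases eq_or_ne n a with rfl | hna
      · rwa [Function.update_self]
      · rw [Function.update_of_ne hna]; exact hε n
    have hsum : ∑ n ∈ F, Function.update ε a u n • v n = ∑ n ∈ F, ε n • v n :=
      Finset.sum_congr rfl fun n hn => by
        rw [Function.update_of_ne (ne_of_mem_of_not_mem hn ha)]
    rw [Finset.sum_insert ha, Finset.sum_insert ha, Function.update_self, hsum]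
    calc ‖w + (c a • v a + ∑ n ∈ F, c n • v n)‖
        = ‖(w + ∑ n ∈ F, c n • v n) + c a • v a‖ := by congr 1; abel
      _ ≤ ‖(w + ∑ n ∈ F, c n • v n) + (t : 𝕜) • u • v a‖ := hstep
      _ = ‖(w + (t : 𝕜) • u • v a) + ∑ n ∈ F, c n • v n‖ := by congr 1; abel
      _ ≤ ‖(w + (t : 𝕜) • u • v a) + (t : 𝕜) • ∑ n ∈ F, ε n • v n‖ := hrest
      _ = ‖w + (t : 𝕜) • (u • v a + ∑ n ∈ F, ε n • v n)‖ := by rw [smul_add, add_assoc]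

end SignChoice

section UpperSets

variable {𝕜 E ι : Type*} [RCLike 𝕜] [NormedAddCommGroup E] [NormedSpace 𝕜 E] [DecidableEq ι]

/-- For `θ` with values in `[0, 1]`, `∑ θ n • v n` is a convex combination of the sums
`∑ n ∈ U, v n` over the strict upper level sets `U` of `θ`. -/
theorem norm_sub_sum_smul_le_of_upperSets (y : E) (v : ι → E) {C : ℝ} (Λ : Finset ι)
    (θ : ι → ℝ) (hθ : ∀ n ∈ Λ, θ n ∈ Set.Icc 0 1)
    (hU : ∀ U ⊆ Λ, (∀ u ∈ U, ∀ w ∈ Λ, w ∉ U → θ w < θ u) → ‖y - ∑ n ∈ U, v n‖ ≤ C) :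
    ‖y - ∑ n ∈ Λ, (θ n : 𝕜) • v n‖ ≤ C := by
  induction Λ using Finset.strongInduction generalizing θ with
  | H Λ ih =>
    rcases Λ.eq_empty_or_nonempty with rfl | hne
    · simpa using hU ∅ subset_rfl (by simp)
    obtain ⟨n₀, hn₀, hmin⟩ := Λ.exists_min_image θ hne
    set c := θ n₀
    have hc : c ∈ Set.Icc (0 : ℝ) 1 := hθ n₀ hn₀
    set Λ' := Λ.filter fun n => c < θ n
    have hΛ' : Λ' ⊂ Λ :=
      Finset.filter_ssubset.mpr ⟨n₀, hn₀, lt_irrefl c⟩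
    set θ' : ι → ℝ := fun n => (θ n - c) / (1 - c)
    have hθθ' : ∀ n ∈ Λ, θ n = c + (1 - c) * θ' n := by
      intro n hn
      rcases (sub_nonneg.mpr hc.2).eq_or_lt with h1c | h1c
      · rw [← h1c, zero_mul, add_zero]
        linarith [hmin n hn, (hθ n hn).2]
      · simp only [θ']; field_simp; ring
    have hIH : ‖y - ∑ n ∈ Λ', (θ' n : 𝕜) • v n‖ ≤ C := by
      refine ih Λ' hΛ' θ' (fun n hn => ?_) fun U hUΛ' hUup => hU U (hUΛ'.trans hΛ'.subset) ?_
      · obtain ⟨hnΛ, hcn⟩ := Finset.mem_filter.mp hn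
        exact ⟨div_nonneg (by linarith) (by linarith [hc.2]),
          div_le_one_of_le₀ (by linarith [(hθ n hnΛ).2]) (by linarith [hc.2])⟩
      · intro u hu w hw hwU
        have hu' := Finset.mem_filter.mp (hUΛ' hu)
        by_cases hw' : w ∈ Λ'
        · by_contra! hle
          exact (hUup u hu w hw' hwU).not_ge
            (div_le_div_of_nonneg_right (by linarith) (by linarith [hc.2]))
        · exact (not_lt.mp fun h => hw' (Finset.mem_filter.mpr ⟨hw, h⟩)).trans_lt hu'.2
    have hsum' : ∑ n ∈ Λ, (θ' n : 𝕜) • v n = ∑ n ∈ Λ', (θ' n : 𝕜) • v n := by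
      refine (Finset.sum_subset hΛ'.subset fun n hn hn' => ?_).symm
      have : θ n = c := le_antisymm (not_lt.mp fun h => hn' (Finset.mem_filter.mpr ⟨hn, h⟩))
        (hmin n hn)
      simp [θ', this]
    have hsplit : y - ∑ n ∈ Λ, (θ n : 𝕜) • v n
        = (c : 𝕜) • (y - ∑ n ∈ Λ, v n)
          + ((1 - c : ℝ) : 𝕜) • (y - ∑ n ∈ Λ', (θ' n : 𝕜) • v n) := by
      have hterm : ∀ n ∈ Λ,
          (θ n : 𝕜) • v n = (c : 𝕜) • v n + ((1 - c : ℝ) : 𝕜) • (θ' n : 𝕜) • v n := by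
        intro n hn
        rw [hθθ' n hn]; push_cast; module
      rw [← hsum', Finset.sum_congr rfl hterm, Finset.sum_add_distrib, ← Finset.smul_sum,
        ← Finset.smul_sum]
      push_cast; module
    calc ‖y - ∑ n ∈ Λ, (θ n : 𝕜) • v n‖
        ≤ c * ‖y - ∑ n ∈ Λ, v n‖ + (1 - c) * ‖y - ∑ n ∈ Λ', (θ' n : 𝕜) • v n‖ := by
          rw [hsplit]
          refine (norm_add_le _ _).trans_eq ?_
          rw [norm_smul, norm_smul, RCLike.norm_ofReal, RCLike.norm_ofReal, abs_of_nonneg hc.1,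
            abs_of_nonneg (sub_nonneg.mpr hc.2)]
      _ ≤ c * C + (1 - c) * C :=
          add_le_add
            (mul_le_mul_of_nonneg_left (hU Λ subset_rfl fun _ _ w hw hwΛ => absurd hw hwΛ) hc.1)
            (mul_le_mul_of_nonneg_left hIH (sub_nonneg.mpr hc.2))
      _ = C := by ring

end UpperSets

namespace BasisOf

variable {𝕜 X : Type*} [RCLike 𝕜] [NormedAddCommGroup X] [NormedSpace 𝕜 X] (B : BasisOf 𝕜 X)

theorem e_ne_zero (n : ℕ) : B.e n ≠ 0 := fun h => by
  simpa [h] using B.biorth n n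

theorem coord_proj (F : Finset ℕ) (x : X) (n : ℕ) :
    B.coord n (B.proj F x) = if n ∈ F then B.coord n x else 0 := by
  simp [proj, map_sum, B.biorth, Finset.sum_ite_eq]

theorem coord_sub_proj (F : Finset ℕ) (x : X) (n : ℕ) :
    B.coord n (x - B.proj F x) = if n ∈ F then 0 else B.coord n x := by
  rw [map_sub, coord_proj]; split_ifs <;> simp

theorem projSeq_eq_proj_image {seq : ℕ → ℕ} (hseq : seq.Injective) (k : ℕ) (x : X) :
    B.projSeq seq k x = B.proj ((Finset.range k).image seq) x := by
  rw [proj, Finset.sum_image fun i _ j _ hij => hseq hij, projSeq]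

theorem sub_proj_eq_sub_proj_union_add (A S : Finset ℕ) (x : X) :
    x - B.proj A x = x - B.proj (A ∪ S) x + B.proj (S \ A) x := by
  simp only [proj]
  rw [← Finset.union_sdiff_self_eq_union, Finset.sum_union Finset.disjoint_sdiff]
  abel

theorem sub_proj_union_eq (A S : Finset ℕ) (x : X) :
    x - B.proj (A ∪ S) x = x - B.proj S x - B.proj (A \ S) (x - B.proj S x) := by
  have hprojy : B.proj (A \ S) (x - B.proj S x) = B.proj (A \ S) x :=
    Finset.sum_congr rfl fun n hn => by
      rw [coord_sub_proj, if_neg (Finset.mem_sdiff.mp hn).2]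
  rw [hprojy, Finset.union_comm, ← Finset.union_sdiff_self_eq_union, proj,
    Finset.sum_union Finset.disjoint_sdiff, sub_sub]
  rfl

variable {B}

theorem PSLCWith.one_le {seq : ℕ → ℕ} {Δ : ℝ} (h : B.PSLCWith seq Δ) : 1 ≤ Δ := by
  have hcoord : ∀ n, ‖B.coord n (B.e 0)‖ ≤ 1 := fun n => by
    rw [B.biorth]; split_ifs <;> simp
  have h0 := h (B.e 0) hcoord ∅ ∅ ⟨by simp, le_rfl, by simp⟩ (by simp) (by simp) (fun _ => 1)
    (fun _ => 1) (fun _ => norm_one) (fun _ => norm_one)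
  simp only [sgnSum, Finset.sum_empty, add_zero] at h0
  exact (le_mul_iff_one_le_left (norm_pos_iff.mpr (B.e_ne_zero 0))).mp h0

/-- Removing the greedy set `{N + 1}` from `1_{[0, N + 1]}` gives
`‖1_{[0, N]}‖ ≤ C ‖1_{[0, N + 1]}‖`; iterating, `‖e₀‖ ≤ C ^ N (N + 1) sup ‖e_n‖`, which
forces `1 ≤ C`. -/
theorem SuppQGWith.one_le {C : ℝ} (h : B.SuppQGWith C) : 1 ≤ C := by
  have hcoord : ∀ F n, B.coord n (B.ones F) = if n ∈ F then 1 else 0 := fun F n => by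
    simp [ones, map_sum, B.biorth, Finset.sum_ite_eq]
  have hstep : ∀ N : ℕ,
      ‖B.ones (Finset.range (N + 1))‖ ≤ C * ‖B.ones (Finset.range (N + 2))‖ := by
    intro N
    have hgreedy : B.IsGreedySet (B.ones (Finset.range (N + 2))) {N + 1} := by
      intro a ha b _
      rw [Finset.mem_singleton.mp ha, hcoord, hcoord,
        if_pos (show N + 1 ∈ Finset.range (N + 2) by simp)]
      split_ifs <;> simp
    have hproj : B.proj {N + 1} (B.ones (Finset.range (N + 2))) = B.e (N + 1) := by
      rw [proj, Finset.sum_singleton, hcoord, if_pos (by simp), one_smul]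
    have hrest : B.ones (Finset.range (N + 2)) - B.e (N + 1) = B.ones (Finset.range (N + 1)) := by
      rw [ones, Finset.sum_range_succ, add_sub_cancel_right, ones]
    simpa [hproj, hrest] using h _ {N + 1} (Finset.singleton_nonempty _) hgreedy
  have he₀ : 0 < ‖B.e 0‖ := norm_pos_iff.mpr (B.e_ne_zero 0)
  have hC₀ : 0 < C := by
    have h0 := hstep 0
    simp only [ones, zero_add, Finset.sum_range_one] at h0
    exact pos_of_mul_pos_left (he₀.trans_le h0) (norm_nonneg _)
  have hiter : ∀ N : ℕ, ‖B.e 0‖ ≤ C ^ N * ‖B.ones (Finset.range (N + 1))‖ := by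
    intro N
    induction N with
    | zero => simp [ones]
    | succ N ih =>
      calc ‖B.e 0‖ ≤ C ^ N * ‖B.ones (Finset.range (N + 1))‖ := ih
        _ ≤ C ^ N * (C * ‖B.ones (Finset.range (N + 2))‖) := by gcongr; exact hstep N
        _ = C ^ (N + 1) * ‖B.ones (Finset.range (N + 1 + 1))‖ := by ring
  obtain ⟨-, c₂, -, -, hup⟩ := B.norm_bounds
  have hones : ∀ N : ℕ, ‖B.ones (Finset.range (N + 1))‖ ≤ ((N + 1 : ℕ) : ℝ) * c₂ := by
    intro N
    calc ‖B.ones (Finset.range (N + 1))‖ ≤ ∑ n ∈ Finset.range (N + 1), ‖B.e n‖ := norm_sum_le _ _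
      _ ≤ ∑ _n ∈ Finset.range (N + 1), c₂ := Finset.sum_le_sum fun n _ => (hup n).1
      _ = ((N + 1 : ℕ) : ℝ) * c₂ := by simp
  by_contra! hC₁
  have hlim : Filter.Tendsto (fun N : ℕ => ((N + 1 : ℕ) : ℝ) * C ^ (N + 1) * c₂) Filter.atTop
      (nhds 0) := by
    simpa using ((tendsto_self_mul_const_pow_of_lt_one hC₀.le hC₁).comp
      (Filter.tendsto_add_atTop_nat 1)).mul_const c₂
  have hle : ‖B.e 0‖ * C ≤ 0 := ge_of_tendsto' hlim fun N => by
    calc ‖B.e 0‖ * C ≤ C ^ N * (((N + 1 : ℕ) : ℝ) * c₂) * C := by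
          gcongr; exact (hiter N).trans (by gcongr; exact hones N)
      _ = ((N + 1 : ℕ) : ℝ) * C ^ (N + 1) * c₂ := by ring
  exact (mul_pos he₀ hC₀).not_ge hle


theorem PSLCWith.norm_add_smul_sgnSum_le {seq : ℕ → ℕ} {Δ : ℝ} (h : B.PSLCWith seq Δ) {z : X}
    {t : ℝ} (ht : 0 ≤ t) (hz : ∀ n, ‖B.coord n z‖ ≤ t) {A D : Finset ℕ} (hAD : TPair seq A D)
    (hD : ∀ d ∈ D, B.coord d z = 0)
    (hAz : ∀ a ∈ A, ∀ j : ℕ, (j ∈ D ∨ B.coord j z ≠ 0) → j ∈ Set.range seq → a < j)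
    {ε δ : ℕ → 𝕜} (hε : ∀ n, ‖ε n‖ = 1) (hδ : ∀ n, ‖δ n‖ = 1) :
    ‖z + (t : 𝕜) • B.sgnSum ε A‖ ≤ Δ * ‖z + (t : 𝕜) • B.sgnSum δ D‖ := by
  rcases ht.eq_or_lt with rfl | ht
  · simpa using le_mul_of_one_le_left (norm_nonneg z) h.one_le
  have ht' : (t : 𝕜) ≠ 0 := RCLike.ofReal_ne_zero.mpr ht.ne'
  have hcoord : ∀ n, B.coord n ((t : 𝕜)⁻¹ • z) = (t : 𝕜)⁻¹ * B.coord n z := fun n => by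
    rw [map_smul, smul_eq_mul]
  have hscale : ∀ (γ : ℕ → 𝕜) (F : Finset ℕ),
      ‖z + (t : 𝕜) • B.sgnSum γ F‖ = t * ‖(t : 𝕜)⁻¹ • z + B.sgnSum γ F‖ := fun γ F => by
    rw [← smul_inv_smul₀ ht' z, ← smul_add, norm_smul, RCLike.norm_ofReal, abs_of_pos ht,
      inv_smul_smul₀ ht']
  have hz' : ∀ n, ‖B.coord n ((t : 𝕜)⁻¹ • z)‖ ≤ 1 := fun n => by
    rw [hcoord, norm_mul, norm_inv, RCLike.norm_ofReal, abs_of_pos ht]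
    exact inv_mul_le_one_of_le₀ (hz n) ht.le
  have hmain := h ((t : 𝕜)⁻¹ • z) hz' A D hAD (fun d hd => by simp [hcoord, hD d hd])
    (fun a ha j hj => hAz a ha j (by simpa [hcoord, ht'] using hj)) ε δ hε hδ
  rw [hscale, hscale, mul_left_comm]
  exact mul_le_mul_of_nonneg_left hmain ht.le

theorem SuppQGWith.norm_sub_sum_truncation_le {C : ℝ} (h : B.SuppQGWith C) (y : X)
    (Λ : Finset ℕ) {t : ℝ} (ht : 0 ≤ t) (hΛ : ∀ n ∈ Λ, t ≤ ‖B.coord n y‖)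
    (hΛc : ∀ n ∉ Λ, ‖B.coord n y‖ ≤ t) (δ : ℕ → 𝕜)
    (hδ : ∀ n ∈ Λ, B.coord n y = ‖B.coord n y‖ * δ n) :
    ‖y - ∑ n ∈ Λ, (B.coord n y - t * δ n) • B.e n‖ ≤ C * ‖y‖ := by
  set θ : ℕ → ℝ := fun n => 1 - t / ‖B.coord n y‖
  have hθ : ∀ n ∈ Λ, (B.coord n y - t * δ n) • B.e n = (θ n : 𝕜) • B.coord n y • B.e n := by
    intro n hn
    rw [smul_smul]
    congr 1
    rcases eq_or_ne (B.coord n y) 0 with h0 | h0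
    · have : t = 0 := le_antisymm (by simpa [h0] using hΛ n hn) ht
      simp [h0, this]
    · have h0' : (‖B.coord n y‖ : 𝕜) ≠ 0 := RCLike.ofReal_ne_zero.mpr (norm_ne_zero_iff.mpr h0)
      simp only [θ]; push_cast; field_simp
      linear_combination (t : 𝕜) * hδ n hn
  rw [Finset.sum_congr rfl hθ]
  refine norm_sub_sum_smul_le_of_upperSets y _ Λ θ (fun n hn => ⟨?_, ?_⟩) fun U hUΛ hU => ?_
  · exact sub_nonneg.mpr (div_le_one_of_le₀ (hΛ n hn) (norm_nonneg _))
  · exact sub_le_self _ (div_nonneg ht (norm_nonneg _))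
  rcases U.eq_empty_or_nonempty with rfl | hUne
  · simpa using le_mul_of_one_le_left (norm_nonneg y) h.one_le
  refine h y U hUne fun u hu b hb => ?_
  by_cases hbΛ : b ∈ Λ
  · have hθbu := hU u hu b hbΛ hb
    rcases ht.eq_or_lt with rfl | htpos
    · simp [θ] at hθbu
    by_contra! hub
    have hu₀ : 0 < ‖B.coord u y‖ := htpos.trans_le (hΛ u (hUΛ hu))
    have := div_le_div_of_nonneg_left ht hu₀ hub.le
    simp only [θ] at hθbu
    linarith
  · exact (hΛc b hbΛ).trans (hΛ u (hUΛ hu))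

theorem tPair_sdiff {seq : ℕ → ℕ} {A S : Finset ℕ} (hS : ↑S ⊆ Set.range seq)
    (hcard : S.card ≤ A.card) (hinit : ∀ a ∈ S, ∀ j ∈ Set.range seq, j ∉ S → a < j) :
    TPair seq (S \ A) (A \ S) :=
  ⟨(Finset.coe_subset.mpr Finset.sdiff_subset).trans hS,
    Finset.card_sdiff_le_card_sdiff_iff.mpr hcard,
    fun a ha d hd hdseq => hinit a (Finset.mem_sdiff.mp ha).1 d hdseq (Finset.mem_sdiff.mp hd).2⟩

theorem PSLCWith.norm_sub_proj_union_add_le {seq : ℕ → ℕ} {Δ : ℝ} (h : B.PSLCWith seq Δ)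
    (x : X) {A S : Finset ℕ} {t : ℝ} (ht : 0 ≤ t) (hAc : ∀ b ∉ A, ‖B.coord b x‖ ≤ t)
    (hS : ↑S ⊆ Set.range seq) (hcard : S.card ≤ A.card)
    (hinit : ∀ a ∈ S, ∀ j ∈ Set.range seq, j ∉ S → a < j)
    {ε δ : ℕ → 𝕜} (hε : ∀ n, ‖ε n‖ = 1) (hδ : ∀ n, ‖δ n‖ = 1) :
    ‖x - B.proj (A ∪ S) x + (t : 𝕜) • B.sgnSum ε (S \ A)‖
      ≤ Δ * ‖x - B.proj (A ∪ S) x + (t : 𝕜) • B.sgnSum δ (A \ S)‖ := by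
  have hz := B.coord_sub_proj (A ∪ S) x
  refine h.norm_add_smul_sgnSum_le ht (fun n => ?_) (tPair_sdiff hS hcard hinit)
    (fun d hd => ?_) (fun a ha j hj hjseq => ?_) hε hδ
  · rw [hz]
    split_ifs with hn
    · simpa using ht
    · exact hAc n fun h => hn (Finset.mem_union_left _ h)
  · rw [hz, if_pos (Finset.mem_union_left _ (Finset.mem_sdiff.mp hd).1)]
  · refine hinit a (Finset.mem_sdiff.mp ha).1 j hjseq fun hjS => ?_
    rcases hj with hj | hj
    · exact (Finset.mem_sdiff.mp hj).2 hjS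
    · exact hj (by rw [hz, if_pos (Finset.mem_union_right _ hjS)])

theorem norm_sub_proj_le_of_threshold {seq : ℕ → ℕ} {Cl Δ : ℝ} (h1 : B.SuppQGWith Cl)
    (h2 : B.PSLCWith seq Δ) (x : X) {A S : Finset ℕ} {t : ℝ} (ht : 0 ≤ t)
    (hA : ∀ a ∈ A, t ≤ ‖B.coord a x‖) (hAc : ∀ b ∉ A, ‖B.coord b x‖ ≤ t)
    (hS : ↑S ⊆ Set.range seq) (hcard : S.card ≤ A.card)
    (hinit : ∀ a ∈ S, ∀ j ∈ Set.range seq, j ∉ S → a < j) :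
    ‖x - B.proj A x‖ ≤ Cl * Δ * ‖x - B.proj S x‖ := by
  set y := x - B.proj S x
  have hy : ∀ n, B.coord n y = if n ∈ S then 0 else B.coord n x := B.coord_sub_proj S x
  have hyΛ : ∀ n ∈ A \ S, B.coord n y = B.coord n x := fun n hn => by
    rw [hy, if_neg (Finset.mem_sdiff.mp hn).2]
  have hyΛc : ∀ n ∉ A \ S, ‖B.coord n y‖ ≤ t := fun n hn => by
    rw [hy]
    split_ifs with hnS
    · simpa using ht
    · exact hAc n fun hnA => hn (Finset.mem_sdiff.mpr ⟨hnA, hnS⟩)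
  obtain ⟨ε, hε, hconv⟩ := exists_norm_eq_one_norm_add_sum_smul_le (S \ A) B.e
    (fun n => B.coord n x) (fun n hn => hAc n (Finset.mem_sdiff.mp hn).2) (x - B.proj (A ∪ S) x)
  choose δ hδ hδx using fun n => exists_norm_eq_one_eq_norm_mul (B.coord n x)
  have htrunc : x - B.proj (A ∪ S) x + (t : 𝕜) • B.sgnSum δ (A \ S)
      = y - ∑ n ∈ A \ S, (B.coord n y - t * δ n) • B.e n := by
    rw [B.sub_proj_union_eq]
    change y - B.proj (A \ S) y + _ = _
    simp only [proj, sgnSum, Finset.smul_sum, smul_smul, sub_smul, Finset.sum_sub_distrib]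
    abel
  calc ‖x - B.proj A x‖ = ‖x - B.proj (A ∪ S) x + B.proj (S \ A) x‖ := by
        rw [← B.sub_proj_eq_sub_proj_union_add]
    _ ≤ ‖x - B.proj (A ∪ S) x + (t : 𝕜) • B.sgnSum ε (S \ A)‖ := hconv
    _ ≤ Δ * ‖x - B.proj (A ∪ S) x + (t : 𝕜) • B.sgnSum δ (A \ S)‖ :=
        h2.norm_sub_proj_union_add_le x ht hAc hS hcard hinit hε hδ
    _ = Δ * ‖y - ∑ n ∈ A \ S, (B.coord n y - t * δ n) • B.e n‖ := by rw [htrunc]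
    _ ≤ Δ * (Cl * ‖y‖) := by
        have := h2.one_le
        gcongr
        refine h1.norm_sub_sum_truncation_le y (A \ S) ht (fun n hn => ?_) hyΛc δ fun n hn => ?_
        · rw [hyΛ n hn]; exact hA n (Finset.mem_sdiff.mp hn).1
        · rw [hyΛ n hn]; exact hδx n
    _ = Cl * Δ * ‖y‖ := by ring

end BasisOf

theorem statement2_general {𝕜 X : Type*} [RCLike 𝕜] [NormedAddCommGroup X] [NormedSpace 𝕜 X]
    (B : BasisOf 𝕜 X) (seq : ℕ → ℕ) (hseq : StrictMono seq)
    (Cl Δ : ℝ) (h1 : B.SuppQGWith Cl) (h2 : B.PSLCWith seq Δ) :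
    B.SPGWith seq (Cl * Δ) := by
  intro x m hm A hA hgreedy k hk
  obtain ⟨a₀, ha₀, hmin⟩ :=
    A.exists_min_image (fun a => ‖B.coord a x‖) (Finset.card_pos.mp (hA ▸ hm))
  rw [B.projSeq_eq_proj_image hseq.injective]
  refine BasisOf.norm_sub_proj_le_of_threshold h1 h2 x (norm_nonneg _) hmin
    (fun b hb => hgreedy a₀ ha₀ b hb) ?_ ?_ ?_
  · intro n hn
    obtain ⟨i, -, rfl⟩ := Finset.mem_image.mp hn
    exact ⟨i, rfl⟩
  · rw [Finset.card_image_of_injective _ hseq.injective, Finset.card_range, hA]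
    exact hk
  · rintro a ha j ⟨l, rfl⟩ hl
    obtain ⟨i, hi, rfl⟩ := Finset.mem_image.mp ha
    refine hseq (not_le.mp fun hli => hl ?_)
    exact Finset.mem_image_of_mem seq (Finset.mem_range.mpr (hli.trans_lt (Finset.mem_range.mp hi)))

/-- A `C_ℓ`-suppression quasi-greedy, `Δ`-(𝐧, PSLC) basis is
(𝐧, strong partially greedy) with constant `C_ℓ·Δ`. -/
theorem statement2 {𝕜 X : Type*} [RCLike 𝕜] [NormedAddCommGroup X] [NormedSpace 𝕜 X]
    [CompleteSpace X] (B : BasisOf 𝕜 X) (seq : ℕ → ℕ) (hseq : StrictMono seq)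
    (Cl Δ : ℝ) (h1 : B.SuppQGWith Cl) (h2 : B.PSLCWith seq Δ) :
    B.SPGWith seq (Cl * Δ) :=
  statement2_general B seq hseq Cl Δ h1 h2
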